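/- arXiv:1702.08120 — 2 statements merged into one kernel-verified Lean document; each statement's English description precedes it below -/
import Mathlib

section
/- Let n ≥ 2 and 1 ≤ p < ∞. Let μ be a finite Borel measure on S^{n-1} that is not concentrated on any closed hemisphere, and define H : ℝⁿ → ℝ by H(x) = ( ∫_{S^{n-1}} max{x·ξ, 0}^p dμ(ξ) )^{1/p}. Then H is convex on ℝⁿ, H(tx) = t·H(x) for all t ≥ 0 and x ∈ ℝⁿ, and H(x) > 0 for every x ≠ 0. -/
open MeasureTheory Metric Set Filter
open scoped RealInnerProductSpace Pointwise

/-- The electrostatic `𝔭`-capacity of a set `E ⊆ ℝⁿ`: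
`C_𝔭(E) = inf { ∫ |∇u|^𝔭 : u ∈ C_c^∞(ℝⁿ), u ≥ 1 on E }`. -/
noncomputable def pCap (n : ℕ) (𝔭 : ℝ) (E : Set (EuclideanSpace ℝ (Fin n))) : ℝ :=
  sInf { c : ℝ | ∃ u : EuclideanSpace ℝ (Fin n) → ℝ,
    ContDiff ℝ (⊤ : ℕ∞) u ∧ HasCompactSupport u ∧ (∀ x ∈ E, 1 ≤ u x) ∧
    c = ∫ x, ‖fderiv ℝ u x‖ ^ 𝔭 }

/-- The Aleksandrov body (Wulff shape) of a function, via its values on unit vectors. -/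
def wulff {n : ℕ} (f : EuclideanSpace ℝ (Fin n) → ℝ) : Set (EuclideanSpace ℝ (Fin n)) :=
  { x | ∀ ξ : EuclideanSpace ℝ (Fin n), ‖ξ‖ = 1 → ⟪x, ξ⟫ ≤ f ξ }

/-- The support function `h_K(x) = sup { ⟪x, y⟫ : y ∈ K }`. -/
noncomputable def suppFn {n : ℕ} (K : Set (EuclideanSpace ℝ (Fin n)))
    (x : EuclideanSpace ℝ (Fin n)) : ℝ :=
  sSup ((fun y => ⟪x, y⟫) '' K)

/-- Two sets are dilates if one is a positive scalar multiple of the other. -/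
def AreDilates {n : ℕ} (A B : Set (EuclideanSpace ℝ (Fin n))) : Prop :=
  ∃ c : ℝ, 0 < c ∧ A = c • B

/-- A convex body: a compact convex set with nonempty interior. -/
def IsConvexBody {n : ℕ} (K : Set (EuclideanSpace ℝ (Fin n))) : Prop :=
  IsCompact K ∧ Convex ℝ K ∧ (interior K).Nonempty

/-- The `L_p` sum of two convex bodies, defined as the Wulff shape of
`(h_K^p + h_L^p)^{1/p}`. -/
noncomputable def lpSum {n : ℕ} (p : ℝ) (K L : Set (EuclideanSpace ℝ (Fin n))) :
    Set (EuclideanSpace ℝ (Fin n)) :=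
  wulff (fun ξ => (suppFn K ξ ^ p + suppFn L ξ ^ p) ^ (1 / p))

/-- The polytope `P(y) = ⋂ᵢ { x : ⟪x, ξᵢ⟫ ≤ yᵢ }`. -/
def polyP {n m : ℕ} (ξ : Fin m → EuclideanSpace ℝ (Fin n)) (y : Fin m → ℝ) :
    Set (EuclideanSpace ℝ (Fin n)) :=
  ⋂ i, { x | ⟪x, ξ i⟫ ≤ y i }

open scoped ENNReal in
theorem stmt10 (n : ℕ) (hn : 2 ≤ n) (p : ℝ) (hp : 1 ≤ p)
    (μ : Measure (sphere (0 : EuclideanSpace ℝ (Fin n)) 1)) [IsFiniteMeasure μ]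
    (hμ : ∀ ξ : EuclideanSpace ℝ (Fin n), ‖ξ‖ = 1 →
      0 < μ { η : sphere (0 : EuclideanSpace ℝ (Fin n)) 1 |
        0 < ⟪(η : EuclideanSpace ℝ (Fin n)), ξ⟫ })
    (H : EuclideanSpace ℝ (Fin n) → ℝ)
    (hH : ∀ x, H x = (∫ η, max ⟪x, (η : EuclideanSpace ℝ (Fin n))⟫ 0 ^ p ∂μ) ^ (1 / p)) :
    ConvexOn ℝ Set.univ H ∧ (∀ t : ℝ, 0 ≤ t → ∀ x, H (t • x) = t * H x) ∧
      ∀ x : EuclideanSpace ℝ (Fin n), x ≠ 0 → 0 < H x := by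
  have hp0 : 0 < p := lt_of_lt_of_le one_pos hp
  haveI : IsFiniteMeasureOnCompacts μ := ⟨fun _ _ => measure_lt_top μ _⟩
  -- the basic nonnegative function
  set g : EuclideanSpace ℝ (Fin n) → sphere (0 : EuclideanSpace ℝ (Fin n)) 1 → ℝ :=
    fun x η => max ⟪x, (η : EuclideanSpace ℝ (Fin n))⟫ 0 with hg
  have hg_nonneg : ∀ x η, 0 ≤ g x η := fun x η => le_max_right _ _
  have hg_cont : ∀ x, Continuous (g x) := fun x =>
    (continuous_const.inner continuous_subtype_val).max continuous_const
  have hgp_cont : ∀ x, Continuous (fun η => g x η ^ p) := fun x =>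
    continuous_iff_continuousAt.2 fun η =>
      (Real.continuousAt_rpow_const _ _ (Or.inr hp0.le)).comp (hg_cont x).continuousAt
  have hgp_int : ∀ x, Integrable (fun η => g x η ^ p) μ := fun x =>
    (hgp_cont x).integrable_of_hasCompactSupport (isClosed_tsupport _).isCompact
  -- ENNReal version
  set φ : EuclideanSpace ℝ (Fin n) → sphere (0 : EuclideanSpace ℝ (Fin n)) 1 → ℝ≥0∞ :=
    fun x η => ENNReal.ofReal (g x η) with hφ
  have hφ_meas : ∀ x, Measurable (φ x) := fun x =>
    ENNReal.measurable_ofReal.comp (hg_cont x).measurable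
  set I : EuclideanSpace ℝ (Fin n) → ℝ≥0∞ := fun x => ∫⁻ η, φ x η ^ p ∂μ with hI
  have hI_lt_top : ∀ x, I x < ⊤ := by
    intro x
    have hb : ∀ η, φ x η ^ p ≤ ENNReal.ofReal (‖x‖ ^ p) := by
      intro η
      rw [← ENNReal.ofReal_rpow_of_nonneg (norm_nonneg x) hp0.le]
      apply ENNReal.rpow_le_rpow _ hp0.le
      apply ENNReal.ofReal_le_ofReal
      simp only [hg]
      have h1 : ⟪x, (η : EuclideanSpace ℝ (Fin n))⟫ ≤ ‖x‖ := by
        calc ⟪x, (η : EuclideanSpace ℝ (Fin n))⟫ ≤ ‖x‖ * ‖(η : EuclideanSpace ℝ (Fin n))‖ :=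
              real_inner_le_norm _ _
          _ = ‖x‖ := by
              rw [show ‖(η : EuclideanSpace ℝ (Fin n))‖ = 1 from mem_sphere_zero_iff_norm.1 η.2, mul_one]
      exact max_le h1 (norm_nonneg x)
    calc I x ≤ ∫⁻ _, ENNReal.ofReal (‖x‖ ^ p) ∂μ := lintegral_mono hb
      _ = ENNReal.ofReal (‖x‖ ^ p) * μ Set.univ := lintegral_const _
      _ < ⊤ := ENNReal.mul_lt_top ENNReal.ofReal_lt_top (measure_lt_top μ _)
  -- relate the real integral to the lintegral
  have hHI : ∀ x, H x = ((I x) ^ (1 / p)).toReal := by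
    intro x
    rw [hH x, ← ENNReal.toReal_rpow]
    congr 1
    rw [integral_eq_lintegral_of_nonneg_ae
        (Filter.Eventually.of_forall fun η => Real.rpow_nonneg (hg_nonneg x η) p)
        (hgp_cont x).aestronglyMeasurable]
    congr 1
    apply lintegral_congr
    intro η
    rw [ENNReal.ofReal_rpow_of_nonneg (hg_nonneg x η) hp0.le]
  -- subadditivity
  have hsub : ∀ x y, H (x + y) ≤ H x + H y := by
    intro x y
    have hptw : ∀ η, φ (x + y) η ≤ (φ x + φ y) η := by
      intro η
      simp only [hφ, hg, Pi.add_apply, ← ENNReal.ofReal_add (hg_nonneg x η) (hg_nonneg y η)]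
      rw [← ENNReal.ofReal_add (le_max_right _ _) (le_max_right _ _)]
      apply ENNReal.ofReal_le_ofReal
      rw [inner_add_left]
      exact max_le (add_le_add (le_max_left _ _) (le_max_left _ _))
        (add_nonneg (hg_nonneg x η) (hg_nonneg y η))
    have h1 : (I (x + y)) ^ (1 / p) ≤ (I x) ^ (1 / p) + (I y) ^ (1 / p) := by
      calc (I (x + y)) ^ (1 / p)
          ≤ (∫⁻ η, (φ x + φ y) η ^ p ∂μ) ^ (1 / p) := by
            apply ENNReal.rpow_le_rpow _ (by positivity)
            exact lintegral_mono fun η => ENNReal.rpow_le_rpow (hptw η) hp0.le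
        _ ≤ (I x) ^ (1 / p) + (I y) ^ (1 / p) :=
            ENNReal.lintegral_Lp_add_le (hφ_meas x).aemeasurable (hφ_meas y).aemeasurable hp
    rw [hHI, hHI, hHI]
    have hfin : ∀ z, (I z) ^ (1 / p) ≠ ⊤ :=
      fun z => ENNReal.rpow_ne_top_of_nonneg (by positivity) (hI_lt_top z).ne
    rw [← ENNReal.toReal_add (hfin x) (hfin y)]
    exact ENNReal.toReal_mono (ENNReal.add_ne_top.2 ⟨hfin x, hfin y⟩) h1
  -- homogeneity
  have hhom : ∀ t : ℝ, 0 ≤ t → ∀ x, H (t • x) = t * H x := by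
    intro t ht x
    have hgt : ∀ η, g (t • x) η = t * g x η := by
      intro η
      simp only [hg, real_inner_smul_left]
      rw [mul_max_of_nonneg _ _ ht, mul_zero]
    rw [hH, hH]
    have : (fun η => g (t • x) η ^ p) = fun η => t ^ p * g x η ^ p := by
      funext η
      rw [hgt η, Real.mul_rpow ht (hg_nonneg x η)]
    simp only [hg] at this
    rw [this, integral_const_mul]
    have hInn : 0 ≤ ∫ η, g x η ^ p ∂μ :=
      integral_nonneg fun η => Real.rpow_nonneg (hg_nonneg x η) p
    rw [Real.mul_rpow (Real.rpow_nonneg ht p) hInn, ← Real.rpow_mul ht,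
      mul_one_div_cancel hp0.ne', Real.rpow_one]
  refine ⟨⟨convex_univ, ?_⟩, hhom, ?_⟩
  · intro x _ y _ a b ha hb hab
    calc H (a • x + b • y) ≤ H (a • x) + H (b • y) := hsub _ _
      _ = a * H x + b * H y := by rw [hhom a ha, hhom b hb]
  · intro x hx
    set ξ := ‖x‖⁻¹ • x with hξdef
    have hξ : ‖ξ‖ = 1 := norm_smul_inv_norm hx
    have hss : { η : sphere (0 : EuclideanSpace ℝ (Fin n)) 1 | 0 < ⟪(η : EuclideanSpace ℝ (Fin n)), ξ⟫ }
        ⊆ Function.support (fun η => g x η ^ p) := by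
      intro η hη
      simp only [Set.mem_setOf_eq, hξdef, real_inner_smul_right] at hη
      have hpos : 0 < ⟪x, (η : EuclideanSpace ℝ (Fin n))⟫ := by
        rw [real_inner_comm]
        have hnx : 0 < ‖x‖⁻¹ := inv_pos.2 (norm_pos_iff.2 hx)
        nlinarith [hη]
      have hgpos : 0 < g x η := lt_max_of_lt_left hpos
      simp only [Function.mem_support]
      exact (Real.rpow_pos_of_pos hgpos p).ne'
    have hint : (0:ℝ) < ∫ η, g x η ^ p ∂μ := by
      rw [integral_pos_iff_support_of_nonneg
        (fun η => Real.rpow_nonneg (hg_nonneg x η) p) (hgp_int x)]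
      exact (hμ ξ hξ).trans_le (measure_mono hss)
    simp only [hg] at hint
    rw [hH]
    exact Real.rpow_pos_of_pos hint _
end

section
/- Let n ≥ 2, 1 < p < ∞ and 1 < 𝔭 < n. Let μ and μ_j (j ∈ ℕ) be finite Borel measures on S^{n-1}, each not concentrated on any closed hemisphere, such that μ_j → μ weakly. For each j let K_j ⊆ ℝⁿ be a convex body containing the origin with ((𝔭−1)/(n−𝔭))·∫_{S^{n-1}} h_{K_j}(ξ)^p dμ_j(ξ) = 1. Then sup_j max_{ξ ∈ S^{n-1}} h_{K_j}(ξ) < ∞. -/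
open MeasureTheory Metric Set Filter
open scoped RealInnerProductSpace Pointwise

lemma aux_integrable {X : Type*} [MeasurableSpace X] [TopologicalSpace X] [CompactSpace X]
    [T2Space X] [OpensMeasurableSpace X] (ν : Measure X) [IsFiniteMeasure ν] {f : X → ℝ}
    (hf : Continuous f) : Integrable f ν :=
  hf.integrable_of_hasCompactSupport (HasCompactSupport.of_compactSpace f)

lemma aux_rpow_lip {p : ℝ} (hp : 1 ≤ p) {a b : ℝ} (hb : 0 ≤ b) (hba : b ≤ a) (ha1 : a ≤ 1) :
    a ^ p - b ^ p ≤ p * (a - b) := by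
  rcases eq_or_lt_of_le (hb.trans hba) with h0 | h0
  · rw [← h0] at hba ⊢
    have hb0 : b = 0 := le_antisymm hba hb
    simp [hb0, Real.zero_rpow (by positivity : p ≠ 0)]
  · have hx0 : 0 ≤ b / a := div_nonneg hb h0.le
    have hbern : 1 + p * (b / a - 1) ≤ (1 + (b / a - 1)) ^ p :=
      one_add_mul_self_le_rpow_one_add (by linarith) hp
    have hx : (1 + (b / a - 1)) = b / a := by ring
    rw [hx] at hbern
    have hdiv : (b / a) ^ p = b ^ p / a ^ p := Real.div_rpow hb h0.le p
    rw [hdiv] at hbern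
    have hap : 0 < a ^ p := Real.rpow_pos_of_pos h0 p
    have h1 : a ^ p - b ^ p ≤ a ^ p * (p * (1 - b / a)) := by
      have := mul_le_mul_of_nonneg_left hbern hap.le
      have h2 : a ^ p * (b ^ p / a ^ p) = b ^ p := by field_simp
      nlinarith
    have h3 : a ^ p * (p * (1 - b / a)) = a ^ p / a * (p * (a - b)) := by
      field_simp
    have h4 : a ^ p / a = a ^ (p - 1) := by
      rw [Real.rpow_sub h0, Real.rpow_one]
    have h5 : a ^ (p - 1) ≤ 1 := Real.rpow_le_one (h0.le) ha1 (by linarith)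
    have h6 : 0 ≤ p * (a - b) := by nlinarith
    calc a ^ p - b ^ p ≤ a ^ p / a * (p * (a - b)) := by rw [← h3]; exact h1
    _ ≤ 1 * (p * (a - b)) := mul_le_mul_of_nonneg_right (h4 ▸ h5) h6
    _ = p * (a - b) := one_mul _

lemma aux_rpow_abs {p a b : ℝ} (hp : 1 ≤ p) (ha : 0 ≤ a) (ha1 : a ≤ 1) (hb : 0 ≤ b)
    (hb1 : b ≤ 1) : |a ^ p - b ^ p| ≤ p * |a - b| := by
  rcases le_total b a with h | h
  · rw [abs_of_nonneg (by nlinarith [Real.rpow_le_rpow hb h (by linarith : (0:ℝ) ≤ p)] : 0 ≤ a ^ p - b ^ p),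
      abs_of_nonneg (by linarith : 0 ≤ a - b)]
    exact aux_rpow_lip hp hb h ha1
  · rw [abs_sub_comm, abs_sub_comm a b,
      abs_of_nonneg (by nlinarith [Real.rpow_le_rpow ha h (by linarith : (0:ℝ) ≤ p)] : 0 ≤ b ^ p - a ^ p),
      abs_of_nonneg (by linarith : 0 ≤ b - a)]
    exact aux_rpow_lip hp ha h hb1

lemma aux_int_diff {X : Type*} [MeasurableSpace X] (ν : Measure X) [IsFiniteMeasure ν]
    {f g : X → ℝ} (hf : Integrable f ν) (hg : Integrable g ν) {C : ℝ}
    (hC : ∀ x, |f x - g x| ≤ C) :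
    |(∫ x, f x ∂ν) - ∫ x, g x ∂ν| ≤ C * (ν univ).toReal := by
  rw [← integral_sub hf hg]
  have h1 : |∫ x, (f x - g x) ∂ν| ≤ ∫ x, |f x - g x| ∂ν := by
    simpa [Real.norm_eq_abs] using norm_integral_le_integral_norm (μ := ν) (fun x => f x - g x)
  have h2 : ∫ x, |f x - g x| ∂ν ≤ ∫ _x, C ∂ν :=
    integral_mono (hf.sub hg).abs (integrable_const C) hC
  have h3 : (∫ _x, C ∂ν) = C * (ν univ).toReal := by
    rw [integral_const, smul_eq_mul, mul_comm]; rfl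
  linarith

section suppFnLemmas
variable {n : ℕ} {K : Set (EuclideanSpace ℝ (Fin n))}

lemma le_suppFn (hK : IsCompact K) {y : EuclideanSpace ℝ (Fin n)} (hy : y ∈ K)
    (x : EuclideanSpace ℝ (Fin n)) : ⟪x, y⟫ ≤ suppFn K x :=
  le_csSup ((hK.image (continuous_const.inner continuous_id)).bddAbove) ⟨y, hy, rfl⟩

lemma suppFn_nonneg (hK : IsCompact K) (h0 : (0 : EuclideanSpace ℝ (Fin n)) ∈ K)
    (x : EuclideanSpace ℝ (Fin n)) : 0 ≤ suppFn K x := by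
  simpa using le_suppFn hK h0 x

lemma suppFn_exists_max (hK : IsCompact K) (hne : K.Nonempty) (x : EuclideanSpace ℝ (Fin n)) :
    ∃ y ∈ K, suppFn K x = ⟪x, y⟫ := by
  have hc : Continuous fun y : EuclideanSpace ℝ (Fin n) => ⟪x, y⟫ :=
    continuous_const.inner continuous_id
  obtain ⟨y, hy, hmax⟩ := hK.exists_isMaxOn hne hc.continuousOn
  refine ⟨y, hy, le_antisymm (csSup_le (hne.image _) ?_) (le_suppFn hK hy x)⟩
  rintro z ⟨w, hw, rfl⟩
  exact hmax hw

lemma suppFn_lipschitz (hK : IsCompact K) (hne : K.Nonempty) :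
    ∃ R : ℝ, 0 ≤ R ∧ ∀ x x' : EuclideanSpace ℝ (Fin n),
      |suppFn K x - suppFn K x'| ≤ R * ‖x - x'‖ := by
  obtain ⟨R, hR⟩ := hK.isBounded.exists_norm_le
  refine ⟨max R 0, le_max_right _ _, ?_⟩
  have key : ∀ x x' : EuclideanSpace ℝ (Fin n),
      suppFn K x - suppFn K x' ≤ max R 0 * ‖x - x'‖ := by
    intro x x'
    rw [sub_le_iff_le_add]
    refine csSup_le (hne.image _) ?_
    rintro z ⟨y, hy, rfl⟩
    have h1 : ⟪x, y⟫ = ⟪x - x', y⟫ + ⟪x', y⟫ := by rw [inner_sub_left]; ring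
    have h2 : ⟪x - x', y⟫ ≤ ‖x - x'‖ * ‖y‖ := real_inner_le_norm _ _
    have h3 : ⟪x', y⟫ ≤ suppFn K x' := le_suppFn hK hy x'
    have h4 : ‖y‖ ≤ max R 0 := (hR y hy).trans (le_max_left _ _)
    nlinarith [norm_nonneg (x - x')]
  intro x x'
  rw [abs_sub_le_iff]
  refine ⟨key x x', ?_⟩
  have := key x' x
  rwa [norm_sub_rev] at this

lemma suppFn_continuous (hK : IsCompact K) (hne : K.Nonempty) : Continuous (suppFn K) := by
  obtain ⟨R, hR0, hR⟩ := suppFn_lipschitz hK hne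
  refine (LipschitzWith.of_dist_le_mul (K := ⟨R, hR0⟩) ?_).continuous
  intro x x'
  rw [Real.dist_eq, dist_eq_norm]
  exact hR x x'

end suppFnLemmas

theorem stmt11 (n : ℕ) (hn : 2 ≤ n) (p 𝔭 : ℝ) (hp : 1 < p) (h𝔭1 : 1 < 𝔭) (h𝔭n : 𝔭 < (n : ℝ))
    (μ : Measure (sphere (0 : EuclideanSpace ℝ (Fin n)) 1))
    (μs : ℕ → Measure (sphere (0 : EuclideanSpace ℝ (Fin n)) 1))
    [IsFiniteMeasure μ] [∀ j, IsFiniteMeasure (μs j)]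
    (hμ : ∀ ξ : EuclideanSpace ℝ (Fin n), ‖ξ‖ = 1 →
      0 < μ { η : sphere (0 : EuclideanSpace ℝ (Fin n)) 1 |
        0 < ⟪(η : EuclideanSpace ℝ (Fin n)), ξ⟫ })
    (hμs : ∀ j, ∀ ξ : EuclideanSpace ℝ (Fin n), ‖ξ‖ = 1 →
      0 < μs j { η : sphere (0 : EuclideanSpace ℝ (Fin n)) 1 |
        0 < ⟪(η : EuclideanSpace ℝ (Fin n)), ξ⟫ })
    (hweak : ∀ f : sphere (0 : EuclideanSpace ℝ (Fin n)) 1 → ℝ, Continuous f →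
      Tendsto (fun j => ∫ η, f η ∂(μs j)) atTop (nhds (∫ η, f η ∂μ)))
    (K : ℕ → Set (EuclideanSpace ℝ (Fin n)))
    (hK : ∀ j, IsConvexBody (K j)) (h0K : ∀ j, (0 : EuclideanSpace ℝ (Fin n)) ∈ K j)
    (hnorm : ∀ j, (𝔭 - 1) / ((n : ℝ) - 𝔭) *
      ∫ η, suppFn (K j) (η : EuclideanSpace ℝ (Fin n)) ^ p ∂(μs j) = 1) :
    ∃ M : ℝ, ∀ j, ∀ ξ : EuclideanSpace ℝ (Fin n), ‖ξ‖ = 1 → suppFn (K j) ξ ≤ M := by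
  classical
  have hp0 : (0:ℝ) < p := by linarith
  -- test functions
  set g : EuclideanSpace ℝ (Fin n) → sphere (0 : EuclideanSpace ℝ (Fin n)) 1 → ℝ :=
    fun u η => max ⟪(η : EuclideanSpace ℝ (Fin n)), u⟫ 0 ^ p with hgdef
  have hrpow_cont : Continuous fun t : ℝ => t ^ p := by
    rw [continuous_iff_continuousAt]
    intro t
    exact Real.continuousAt_rpow_const t p (Or.inr hp0.le)
  have hg_cont : ∀ u, Continuous (g u) := fun u =>
    hrpow_cont.comp ((continuous_subtype_val.inner continuous_const).max continuous_const)
  have hη_norm : ∀ η : sphere (0 : EuclideanSpace ℝ (Fin n)) 1,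
      ‖(η : EuclideanSpace ℝ (Fin n))‖ = 1 := fun η => mem_sphere_zero_iff_norm.mp η.2
  have hg_nonneg : ∀ u η, 0 ≤ g u η := fun u η => Real.rpow_nonneg (le_max_right _ _) p
  -- Lipschitz estimate for g in u
  have hg_lip : ∀ u v : EuclideanSpace ℝ (Fin n), ‖u‖ = 1 → ‖v‖ = 1 →
      ∀ η, |g u η - g v η| ≤ p * ‖u - v‖ := by
    intro u v hu hv η
    have hbound : ∀ w : EuclideanSpace ℝ (Fin n), ‖w‖ = 1 →
        0 ≤ max ⟪(η : EuclideanSpace ℝ (Fin n)), w⟫ 0 ∧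
        max ⟪(η : EuclideanSpace ℝ (Fin n)), w⟫ 0 ≤ 1 := by
      intro w hw
      refine ⟨le_max_right _ _, max_le ?_ zero_le_one⟩
      calc ⟪(η : EuclideanSpace ℝ (Fin n)), w⟫
          ≤ ‖(η : EuclideanSpace ℝ (Fin n))‖ * ‖w‖ := real_inner_le_norm _ _
        _ = 1 := by rw [hη_norm η, hw, one_mul]
    obtain ⟨ha0, ha1⟩ := hbound u hu
    obtain ⟨hb0, hb1⟩ := hbound v hv
    have h1 : |g u η - g v η| ≤
        p * |max ⟪(η : EuclideanSpace ℝ (Fin n)), u⟫ 0 -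
          max ⟪(η : EuclideanSpace ℝ (Fin n)), v⟫ 0| :=
      aux_rpow_abs hp.le ha0 ha1 hb0 hb1
    have h2 : |max ⟪(η : EuclideanSpace ℝ (Fin n)), u⟫ 0 -
        max ⟪(η : EuclideanSpace ℝ (Fin n)), v⟫ 0| ≤ ‖u - v‖ := by
      have h3 : |max ⟪(η : EuclideanSpace ℝ (Fin n)), u⟫ 0 -
          max ⟪(η : EuclideanSpace ℝ (Fin n)), v⟫ 0| ≤
          |⟪(η : EuclideanSpace ℝ (Fin n)), u⟫ - ⟪(η : EuclideanSpace ℝ (Fin n)), v⟫| :=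
        abs_max_sub_max_le_abs _ _ _
      have h4 : ⟪(η : EuclideanSpace ℝ (Fin n)), u⟫ - ⟪(η : EuclideanSpace ℝ (Fin n)), v⟫
          = ⟪(η : EuclideanSpace ℝ (Fin n)), u - v⟫ := (inner_sub_right _ _ _).symm
      have h5 : |⟪(η : EuclideanSpace ℝ (Fin n)), u - v⟫| ≤
          ‖(η : EuclideanSpace ℝ (Fin n))‖ * ‖u - v‖ := abs_real_inner_le_norm _ _
      rw [h4] at h3
      rw [hη_norm η, one_mul] at h5
      exact h3.trans h5
    calc |g u η - g v η| ≤ p * |_ - _| := h1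
      _ ≤ p * ‖u - v‖ := mul_le_mul_of_nonneg_left h2 hp0.le
  -- masses
  have hmass : Tendsto (fun j => ((μs j) univ).toReal) atTop (nhds ((μ univ).toReal)) := by
    have := hweak (fun _ => (1:ℝ)) continuous_const
    simpa [integral_const, smul_eq_mul, Measure.real] using this
  obtain ⟨B, hB⟩ : ∃ B : ℝ, ∀ j, ((μs j) univ).toReal ≤ B := by
    obtain ⟨B, hB⟩ := hmass.bddAbove_range
    exact ⟨B, fun j => hB (mem_range_self j)⟩
  set mB : ℝ := max B 0 with hmBdef
  have hmB0 : 0 ≤ mB := le_max_right _ _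
  have hmBj : ∀ j, ((μs j) univ).toReal ≤ mB := fun j => (hB j).trans (le_max_left _ _)
  set L : ℝ := p * mB with hLdef
  have hL0 : 0 ≤ L := mul_nonneg hp0.le hmB0
  -- the functionals
  set F : Measure (sphere (0 : EuclideanSpace ℝ (Fin n)) 1) →
      EuclideanSpace ℝ (Fin n) → ℝ := fun ν u => ∫ η, g u η ∂ν with hFdef
  have hIntμ : ∀ u, Integrable (g u) μ := fun u => aux_integrable μ (hg_cont u)
  have hIntμs : ∀ j u, Integrable (g u) (μs j) := fun j u => aux_integrable (μs j) (hg_cont u)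
  -- positivity of F μ
  have hFpos : ∀ u : EuclideanSpace ℝ (Fin n), ‖u‖ = 1 → 0 < F μ u := by
    intro u hu
    have : 0 < ∫ η, g u η ∂μ := by
      rw [integral_pos_iff_support_of_nonneg (hg_nonneg u) (hIntμ u)]
      refine lt_of_lt_of_le (hμ u hu) (measure_mono ?_)
      intro η hη
      have hpos : (0:ℝ) < ⟪(η : EuclideanSpace ℝ (Fin n)), u⟫ := hη
      have : g u η = ⟪(η : EuclideanSpace ℝ (Fin n)), u⟫ ^ p := by
        simp only [hgdef]
        rw [max_eq_left hpos.le]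
      simp only [Function.mem_support, this]
      exact (Real.rpow_pos_of_pos hpos p).ne'
    exact this
  have hFconv : ∀ u, Tendsto (fun j => F (μs j) u) atTop (nhds (F μ u)) :=
    fun u => hweak (g u) (hg_cont u)
  -- Lipschitz for F (μs j)
  have hF_lip : ∀ j, ∀ u v : EuclideanSpace ℝ (Fin n), ‖u‖ = 1 → ‖v‖ = 1 →
      |F (μs j) u - F (μs j) v| ≤ L * ‖u - v‖ := by
    intro j u v hu hv
    have := aux_int_diff (μs j) (hIntμs j u) (hIntμs j v) (C := p * ‖u - v‖)
      (fun η => hg_lip u v hu hv η)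
    calc |F (μs j) u - F (μs j) v| ≤ p * ‖u - v‖ * ((μs j) univ).toReal := this
      _ ≤ p * ‖u - v‖ * mB :=
        mul_le_mul_of_nonneg_left (hmBj j) (by positivity)
      _ = L * ‖u - v‖ := by rw [hLdef]; ring
  -- compact cover
  have hSc : IsCompact (sphere (0 : EuclideanSpace ℝ (Fin n)) 1) := isCompact_sphere 0 1
  obtain ⟨t, htS, htcov⟩ := hSc.elim_nhds_subcover
    (fun u => ball u (F μ u / (4 * (L + 1)))) (by
      intro u hu
      refine ball_mem_nhds u ?_
      have := hFpos u (mem_sphere_zero_iff_norm.mp hu)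
      positivity)
  haveI : NeZero n := ⟨by omega⟩
  haveI : Nontrivial (EuclideanSpace ℝ (Fin n)) := inferInstance
  obtain ⟨u0, hu0⟩ : ∃ u0 : EuclideanSpace ℝ (Fin n), ‖u0‖ = 1 :=
    exists_norm_eq _ zero_le_one
  have htne : t.Nonempty := by
    rcases Finset.eq_empty_or_nonempty t with rfl | h
    · exfalso
      have := htcov (mem_sphere_zero_iff_norm.mpr hu0)
      simpa using this
    · exact h
  set c0 : ℝ := (t.inf' htne fun u => F μ u) / 2 with hc0def
  have hc0pos : 0 < c0 := by
    apply div_pos _ two_pos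
    rw [Finset.lt_inf'_iff]
    intro u hu
    exact hFpos u (mem_sphere_zero_iff_norm.mp (htS u hu))
  -- choose J
  have hJex : ∀ u ∈ t, ∃ J : ℕ, ∀ j ≥ J, |F (μs j) u - F μ u| < F μ u / 4 := by
    intro u hu
    have hpos : 0 < F μ u / 4 := by
      have := hFpos u (mem_sphere_zero_iff_norm.mp (htS u hu)); linarith
    obtain ⟨N, hN⟩ := Metric.tendsto_atTop.mp (hFconv u) _ hpos
    exact ⟨N, fun j hj => by rw [← Real.dist_eq]; exact hN j hj⟩
  choose! J hJ using hJex
  set J0 : ℕ := t.sup J with hJ0def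
  -- uniform lower bound
  have hunif : ∀ j, J0 ≤ j → ∀ u : EuclideanSpace ℝ (Fin n), ‖u‖ = 1 → c0 ≤ F (μs j) u := by
    intro j hj u hu
    obtain ⟨v, hvt, hv⟩ := mem_iUnion₂.mp (htcov (mem_sphere_zero_iff_norm.mpr hu))
    have hvS : ‖v‖ = 1 := mem_sphere_zero_iff_norm.mp (htS v hvt)
    have hdist : ‖u - v‖ < F μ v / (4 * (L + 1)) := by
      rw [mem_ball, dist_eq_norm] at hv; exact hv
    have h1 := hF_lip j u v hu hvS
    have h2 : |F (μs j) v - F μ v| < F μ v / 4 := hJ v hvt j (le_trans (Finset.le_sup hvt) hj)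
    have h3 : L * ‖u - v‖ ≤ F μ v / 4 := by
      have hLv : L * ‖u - v‖ ≤ (L + 1) * (F μ v / (4 * (L + 1))) := by
        nlinarith [norm_nonneg (u - v)]
      have : (L + 1) * (F μ v / (4 * (L + 1))) = F μ v / 4 := by
        field_simp
      linarith
    have h5 : (t.inf' htne fun w => F μ w) ≤ F μ v := Finset.inf'_le _ hvt
    have h1' := abs_le.mp h1
    have h2' := abs_lt.mp h2
    rw [hc0def]
    linarith [h1'.1, h1'.2, h2'.1, h2'.2]
  -- normalization constant
  have hn𝔭 : (0:ℝ) < (n : ℝ) - 𝔭 := by linarith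
  have h𝔭1' : (0:ℝ) < 𝔭 - 1 := by linarith
  set A : ℝ := ((n : ℝ) - 𝔭) / (𝔭 - 1) with hAdef
  have hApos : 0 < A := div_pos hn𝔭 h𝔭1'
  have hIeq : ∀ j, (∫ η, suppFn (K j) (η : EuclideanSpace ℝ (Fin n)) ^ p ∂(μs j)) = A := by
    intro j
    have h := hnorm j
    rw [div_mul_eq_mul_div, div_eq_iff (ne_of_gt hn𝔭)] at h
    rw [hAdef, eq_div_iff (ne_of_gt h𝔭1')]
    linarith [h]
  -- basic facts on the bodies
  have hKcomp : ∀ j, IsCompact (K j) := fun j => (hK j).1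
  have hKne : ∀ j, (K j).Nonempty := fun j => ⟨0, h0K j⟩
  have hsupp_cont : ∀ j, Continuous fun η : sphere (0 : EuclideanSpace ℝ (Fin n)) 1 =>
      suppFn (K j) (η : EuclideanSpace ℝ (Fin n)) ^ p := fun j =>
    hrpow_cont.comp ((suppFn_continuous (hKcomp j) (hKne j)).comp continuous_subtype_val)
  have hsupp_int : ∀ j, Integrable
      (fun η : sphere (0 : EuclideanSpace ℝ (Fin n)) 1 =>
        suppFn (K j) (η : EuclideanSpace ℝ (Fin n)) ^ p) (μs j) :=
    fun j => aux_integrable _ (hsupp_cont j)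
  -- the main bound for large j
  set M1 : ℝ := (A / c0) ^ (1/p) with hM1def
  have hM1nonneg : 0 ≤ M1 := Real.rpow_nonneg (by positivity) _
  have hbound_ge : ∀ j, J0 ≤ j → ∀ ξ : EuclideanSpace ℝ (Fin n), ‖ξ‖ = 1 →
      suppFn (K j) ξ ≤ M1 := by
    intro j hj ξ hξ
    obtain ⟨y, hyK, hy⟩ := suppFn_exists_max (hKcomp j) (hKne j) ξ
    rcases le_or_gt (suppFn (K j) ξ) 0 with h | h
    · exact h.trans hM1nonneg
    · have hy0 : (0:ℝ) < ⟪ξ, y⟫ := hy ▸ h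
      have hynorm : 0 < ‖y‖ := by
        rcases eq_or_ne y 0 with rfl | hne
        · simp [inner_zero_right] at hy0
        · exact norm_pos_iff.mpr hne
      set u : EuclideanSpace ℝ (Fin n) := ‖y‖⁻¹ • y with hudef
      have hu : ‖u‖ = 1 := by
        rw [hudef, norm_smul, norm_inv, norm_norm]
        field_simp
      have hpt : ∀ η : sphere (0 : EuclideanSpace ℝ (Fin n)) 1,
          ‖y‖ ^ p * g u η ≤ suppFn (K j) (η : EuclideanSpace ℝ (Fin n)) ^ p := by
        intro η
        have h1 : ‖y‖ * max ⟪(η : EuclideanSpace ℝ (Fin n)), u⟫ 0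
            = max ⟪(η : EuclideanSpace ℝ (Fin n)), y⟫ 0 := by
          rw [hudef, real_inner_smul_right]
          rw [mul_max_of_nonneg _ _ hynorm.le, mul_zero]
          congr 1
          field_simp
        have h2 : max ⟪(η : EuclideanSpace ℝ (Fin n)), y⟫ 0
            ≤ suppFn (K j) (η : EuclideanSpace ℝ (Fin n)) :=
          max_le (le_suppFn (hKcomp j) hyK _) (suppFn_nonneg (hKcomp j) (h0K j) _)
        have h3 : ‖y‖ ^ p * g u η
            = (‖y‖ * max ⟪(η : EuclideanSpace ℝ (Fin n)), u⟫ 0) ^ p := by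
          rw [hgdef, Real.mul_rpow hynorm.le (le_max_right _ _)]
        rw [h3, h1]
        exact Real.rpow_le_rpow (le_max_right _ _) h2 hp0.le
      have hint2 : (∫ η, ‖y‖ ^ p * g u η ∂(μs j)) = ‖y‖ ^ p * F (μs j) u := by
        rw [hFdef]
        exact integral_const_mul _ _
      have hint1 : ‖y‖ ^ p * F (μs j) u ≤ A := by
        rw [← hint2, ← hIeq j]
        exact integral_mono ((hIntμs j u).const_mul _) (hsupp_int j) hpt
      have hFu : c0 ≤ F (μs j) u := hunif j hj u hu
      have hyp0 : (0:ℝ) ≤ ‖y‖ ^ p := Real.rpow_nonneg hynorm.le p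
      have hr : ‖y‖ ^ p * c0 ≤ A :=
        le_trans (mul_le_mul_of_nonneg_left hFu hyp0) hint1
      have hrp : ‖y‖ ^ p ≤ A / c0 := (le_div_iff₀ hc0pos).mpr hr
      have hrM : ‖y‖ ≤ M1 := by
        have hid : (‖y‖ ^ p) ^ (1/p) = ‖y‖ := by
          rw [one_div]
          exact Real.rpow_rpow_inv hynorm.le (ne_of_gt hp0)
        calc ‖y‖ = (‖y‖ ^ p) ^ (1/p) := hid.symm
          _ ≤ (A / c0) ^ (1/p) := Real.rpow_le_rpow hyp0 hrp (by positivity)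
      have hle : suppFn (K j) ξ ≤ ‖y‖ := by
        rw [hy]
        calc ⟪ξ, y⟫ ≤ ‖ξ‖ * ‖y‖ := real_inner_le_norm _ _
          _ = ‖y‖ := by rw [hξ, one_mul]
      exact hle.trans hrM
  -- bounds for small j
  set Rb : ℕ → ℝ := fun j => sSup ((fun y => ‖y‖) '' K j) with hRbdef
  have hRb_bound : ∀ j, ∀ ξ : EuclideanSpace ℝ (Fin n), ‖ξ‖ = 1 →
      suppFn (K j) ξ ≤ max (Rb j) 0 := by
    intro j ξ hξ
    obtain ⟨y, hyK, hy⟩ := suppFn_exists_max (hKcomp j) (hKne j) ξ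
    rw [hy]
    calc ⟪ξ, y⟫ ≤ ‖ξ‖ * ‖y‖ := real_inner_le_norm _ _
      _ = ‖y‖ := by rw [hξ, one_mul]
      _ ≤ Rb j := le_csSup ((hKcomp j).image continuous_norm).bddAbove ⟨y, hyK, rfl⟩
      _ ≤ max (Rb j) 0 := le_max_left _ _
  refine ⟨M1 + ∑ i ∈ Finset.range J0, max (Rb i) 0, ?_⟩
  intro j ξ hξ
  have hsumnn : (0:ℝ) ≤ ∑ i ∈ Finset.range J0, max (Rb i) 0 :=
    Finset.sum_nonneg fun i _ => le_max_right _ _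
  rcases le_or_gt J0 j with hj | hj
  · have := hbound_ge j hj ξ hξ
    linarith
  · have h1 := hRb_bound j ξ hξ
    have h2 : max (Rb j) 0 ≤ ∑ i ∈ Finset.range J0, max (Rb i) 0 :=
      Finset.single_le_sum (fun i _ => le_max_right (Rb i) 0) (Finset.mem_range.mpr hj)
    linarith
end
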